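/- arXiv:1501.05037 — 2 statements merged into one kernel-verified Lean document; each statement's English description precedes it below -/
import Mathlib

section
/- Let d ≥ 1 and let G be a simple graph on a countable vertex set V whose vertices can be enumerated v₀, v₁, v₂, … so that every vertex vₙ has at most d neighbors among {v₀, …, v_{n−1}} (i.e. G is d-degenerate with a witnessing ordering). Let g be a function assigning a real number to every edge of G. Then there exists a map f : V → ℝ^d_d such that for every edge {a,b} of G one has ⟨f(a) − f(b), f(a) − f(b)⟩ = g(a,b), and moreover the image set f(V) is in d-general position; in particular f is injective. -/
/-- The Minkowski space `ℝ^d_d`. -/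
abbrev Mink (d : ℕ) :=
  EuclideanSpace ℝ (Fin d) × EuclideanSpace ℝ (Fin d)

/-- The indefinite bilinear form of signature `(d, d)` on `Mink d`. -/
noncomputable def mform (d : ℕ) (u v : Mink d) : ℝ :=
  inner ℝ u.1 v.1 - inner ℝ u.2 v.2

/-- A set `S` of points of a real vector space is in `d`-general position if every
subset of `S` with at most `d + 1` elements is affinely independent. -/
def InGenPos (d : ℕ) {W : Type*} [AddCommGroup W] [Module ℝ W] (S : Set W) : Prop :=
  ∀ t : Finset W, ↑t ⊆ S → t.card ≤ d + 1 → AffineIndependent ℝ (fun x : t => (x : W))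

/-!
Write a point of `ℝ^d_d` in light-cone coordinates as `(x + y, x - y)`; its squared length is
then `4⟪x, y⟫`. Place the `n`-th vertex at `x = γ(n)` on the moment curve
`γ(t) = (t, t², …, t^d)`, whose points are in `d`-general position, and choose the
`y`-coordinates one vertex at a time. The edge conditions for `vₙ` are at most `d` linear
equations `⟪γ(n) - γ(m), yₙ⟫ = cₘ`, one for each earlier neighbour `vₘ`. They are solved by
the coefficient vector `(R₁, …, R_d)` of a polynomial `R` of degree at most `d` interpolating
`0` at `n` and `-cₘ` at each such `m`, because `⟪γ(t), (R₁, …, R_d)⟫ = R(t) - R(0)`.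
-/

open Polynomial Finset Function
open scoped InnerProductSpace

noncomputable section

lemma exists_natDegree_le_eval_eq {K ι : Type*} [Field K] {s : Finset ι} {τ : ι → K}
    (hτ : Set.InjOn τ s) {d : ℕ} (hs : #s ≤ d + 1) (r : ι → K) :
    ∃ R : K[X], R.natDegree ≤ d ∧ ∀ i ∈ s, R.eval (τ i) = r i := by
  classical
  exact ⟨Lagrange.interpolate s τ r,
    natDegree_le_iff_degree_le.2 <| Order.le_of_lt_succ <|
      (Lagrange.degree_interpolate_lt (r := r) hτ).trans_le (WithBot.coe_le_coe.2 hs),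
    fun _ hi => Lagrange.eval_interpolate_at_node r hτ hi⟩

lemma exists_seq_forall_lt_rel {E : Type*} [Nonempty E] (Q : ℕ → ℕ → E → E → Prop)
    (h : ∀ n (prev : ℕ → E), ∃ z, ∀ m < n, Q n m z (prev m)) :
    ∃ w : ℕ → E, ∀ n m, m < n → Q n m (w n) (w m) := by
  classical
  choose step hstep using h
  let extend (n : ℕ) (prev : ∀ m < n, E) : ℕ → E := fun m =>
    if hm : m < n then prev m hm else Classical.arbitrary E
  let w : ℕ → E := Nat.strongRec fun n prev => step n (extend n prev)
  refine ⟨w, fun n m hm => ?_⟩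
  rw [show w n = step n (extend n fun m _ => w m) from Nat.strongRec_eq _ n]
  simpa [extend, hm] using hstep n (extend n fun m _ => w m) m hm

def momentCurve (d : ℕ) (t : ℝ) : EuclideanSpace ℝ (Fin d) :=
  WithLp.toLp 2 fun i => t ^ (i.1 + 1)

def coeffVec (d : ℕ) (R : ℝ[X]) : EuclideanSpace ℝ (Fin d) :=
  WithLp.toLp 2 fun i => R.coeff (i.1 + 1)

lemma inner_momentCurve_coeffVec {d : ℕ} {R : ℝ[X]} (hR : R.natDegree ≤ d) (t : ℝ) :
    ⟪momentCurve d t, coeffVec d R⟫_ℝ = R.eval t - R.coeff 0 := by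
  rw [eval_eq_sum_range' (Nat.lt_succ_of_le hR), sum_range_succ', PiLp.inner_apply,
    ← Fin.sum_univ_eq_sum_range]
  simp [momentCurve, coeffVec, mul_comm]

lemma momentCurve_injective {d : ℕ} (hd : 1 ≤ d) : Injective (momentCurve d) :=
  fun s t h => by simpa [momentCurve] using congrArg (fun v => v ⟨0, hd⟩) h

lemma affineIndependent_momentCurve {d : ℕ} {ι : Type*} [Fintype ι] {τ : ι → ℝ}
    (hτ : Injective τ) (hcard : Fintype.card ι ≤ d + 1) :
    AffineIndependent ℝ (momentCurve d ∘ τ) := by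
  classical
  rw [affineIndependent_iff]
  intro s w hw hws i hi
  obtain ⟨R, hR, hRτ⟩ := exists_natDegree_le_eval_eq (s := univ) hτ.injOn
    (by simpa using hcard) (Pi.single i 1)
  calc w i = ∑ j ∈ s, w j * R.eval (τ j) := by
        simp [hRτ, Pi.single_apply, hi]
    _ = ⟪∑ j ∈ s, w j • momentCurve d (τ j), coeffVec d R⟫_ℝ + R.coeff 0 * ∑ j ∈ s, w j := by
        simp only [sum_inner, real_inner_smul_left, inner_momentCurve_coeffVec hR, mul_sum,
          ← sum_add_distrib]
        exact sum_congr rfl fun j _ => by ring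
    _ = 0 := by
        simp only [comp_apply] at hws
        rw [hws, hw, inner_zero_left, mul_zero, add_zero]

lemma exists_inner_momentCurve_sub_eq {d : ℕ} {ι : Type*} {τ : ι → ℝ} (hτ : Injective τ)
    {s : Finset ι} {i : ι} (hi : i ∉ s) (hs : #s ≤ d) (a : ι → ℝ) :
    ∃ z, ∀ j ∈ s, ⟪momentCurve d (τ i) - momentCurve d (τ j), z⟫_ℝ = a j := by
  classical
  obtain ⟨R, hR, hRτ⟩ := exists_natDegree_le_eval_eq (s := insert i s) (d := d) hτ.injOn
    (by rw [card_insert_of_notMem hi]; omega) (update (-a) i 0)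
  refine ⟨coeffVec d R, fun j hj => ?_⟩
  rw [inner_sub_left, inner_momentCurve_coeffVec hR, inner_momentCurve_coeffVec hR,
    hRτ i (mem_insert_self _ _), hRτ j (mem_insert_of_mem hj)]
  rw [update_self, update_of_ne (ne_of_mem_of_not_mem hj hi), Pi.neg_apply]
  ring

lemma exists_seq_inner_momentCurve_sub_eq {d : ℕ} (adj : ℕ → ℕ → Prop)
    (hdeg : ∀ n, {m | m < n ∧ adj n m}.ncard ≤ d) (c : ℕ → ℕ → ℝ) :
    ∃ w : ℕ → EuclideanSpace ℝ (Fin d), ∀ n m, m < n → adj n m →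
      ⟪momentCurve d n - momentCurve d m, w n - w m⟫_ℝ = c n m := by
  classical
  refine exists_seq_forall_lt_rel
    (fun n m zn zm => adj n m → ⟪momentCurve d n - momentCurve d m, zn - zm⟫_ℝ = c n m)
    fun n prev => ?_
  have hcard : #{m ∈ range n | adj n m} ≤ d := by
    simpa [← Set.ncard_coe_finset] using hdeg n
  obtain ⟨z, hz⟩ := exists_inner_momentCurve_sub_eq Nat.cast_injective (i := n) (by simp) hcard
    fun m => c n m + ⟪momentCurve d n - momentCurve d m, prev m⟫_ℝ
  refine ⟨z, fun m hm hadj => ?_⟩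
  rw [inner_sub_right, hz m (by simp [hm, hadj])]
  ring

def toMink {d : ℕ} (x y : EuclideanSpace ℝ (Fin d)) : Mink d := (x + y, x - y)

lemma toMink_sub_toMink {d : ℕ} (x y x' y' : EuclideanSpace ℝ (Fin d)) :
    toMink x y - toMink x' y' = toMink (x - x') (y - y') := by
  ext1 <;> simp only [toMink, Prod.fst_sub, Prod.snd_sub] <;> abel

lemma mform_toMink_self {d : ℕ} (x y : EuclideanSpace ℝ (Fin d)) :
    mform d (toMink x y) (toMink x y) = 4 * ⟪x, y⟫_ℝ := by
  rw [mform, toMink, real_inner_add_add_self, real_inner_sub_sub_self]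
  ring

def halfSum (d : ℕ) : Mink d →ₗ[ℝ] EuclideanSpace ℝ (Fin d) :=
  (2⁻¹ : ℝ) • (LinearMap.fst ℝ _ _ + LinearMap.snd ℝ _ _)

lemma halfSum_toMink {d : ℕ} (x y : EuclideanSpace ℝ (Fin d)) : halfSum d (toMink x y) = x := by
  simp only [halfSum, toMink, LinearMap.smul_apply, LinearMap.add_apply, LinearMap.fst_apply,
    LinearMap.snd_apply, add_add_sub_cancel, ← two_smul ℝ x, smul_smul]
  norm_num

section InGenPos

variable {d : ℕ} {W W' : Type*} [AddCommGroup W] [Module ℝ W] [AddCommGroup W'] [Module ℝ W']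

lemma InGenPos.mono {S T : Set W} (h : InGenPos d T) (hST : S ⊆ T) : InGenPos d S :=
  fun t hts htc => h t (hts.trans hST) htc

lemma InGenPos.of_image (L : W →ₗ[ℝ] W') {S : Set W} (hL : Set.InjOn L S)
    (h : InGenPos d (L '' S)) : InGenPos d S := by
  classical
  intro t hts htc
  have hLt : AffineIndependent ℝ (fun y : t.image L => (y : W')) :=
    h _ (by simpa using Set.image_mono hts) (card_image_le.trans htc)
  let φ : t ↪ t.image L := ⟨fun x => ⟨L x, mem_image_of_mem _ x.2⟩,
    fun x y hxy => Subtype.ext (hL (hts x.2) (hts y.2) (congrArg Subtype.val hxy))⟩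
  exact AffineIndependent.of_comp L.toAffineMap (hLt.comp_embedding φ)

end InGenPos

lemma inGenPos_range_momentCurve (d : ℕ) : InGenPos d (Set.range (momentCurve d)) := by
  intro t hts htc
  choose τ hτ using fun x : t => hts x.2
  have hτ_inj : Injective τ := fun x y h => Subtype.ext (by rw [← hτ x, ← hτ y, h])
  have ht : (fun x : t => (x : EuclideanSpace ℝ (Fin d))) = momentCurve d ∘ τ :=
    funext fun x => (hτ x).symm
  rw [ht]
  exact affineIndependent_momentCurve hτ_inj (by simpa using htc)

lemma injective_toMink_momentCurve {d : ℕ} (hd : 1 ≤ d) {ι : Type*} {τ : ι → ℝ}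
    (hτ : Injective τ) (w : ι → EuclideanSpace ℝ (Fin d)) :
    Injective fun i => toMink (momentCurve d (τ i)) (w i) :=
  Injective.of_comp (f := halfSum d) <| by
    simpa only [comp_def, halfSum_toMink] using (momentCurve_injective hd).comp hτ

lemma inGenPos_range_toMink_momentCurve {d : ℕ} (hd : 1 ≤ d) {ι : Type*} {τ : ι → ℝ}
    (hτ : Injective τ) (w : ι → EuclideanSpace ℝ (Fin d)) :
    InGenPos d (Set.range fun i => toMink (momentCurve d (τ i)) (w i)) := by
  refine InGenPos.of_image (halfSum d) ?_ ((inGenPos_range_momentCurve d).mono ?_)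
  · rintro _ ⟨i, rfl⟩ _ ⟨j, rfl⟩ h
    rw [halfSum_toMink, halfSum_toMink] at h
    rw [hτ (momentCurve_injective hd h)]
  · rintro _ ⟨_, ⟨i, rfl⟩, rfl⟩
    exact ⟨τ i, (halfSum_toMink _ _).symm⟩

end

/-- Any `d`-degenerate (with witnessing ordering) simple graph on a
countable vertex set, with arbitrary real squared edge lengths `g`, admits a simplicial
isometric map into `ℝ^d_d` whose vertex images are in `d`-general position; in
particular the map is injective. -/
theorem isometric_embedding_of_degenerate (d : ℕ) (hd : 1 ≤ d) {V : Type*}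
    (G : SimpleGraph V) (e : ℕ ≃ V)
    (hdeg : ∀ n : ℕ, {m : ℕ | m < n ∧ G.Adj (e n) (e m)}.ncard ≤ d)
    (g : V → V → ℝ) (hsymm : ∀ a b : V, g a b = g b a) :
    ∃ f : V → Mink d,
      (∀ a b : V, G.Adj a b → mform d (f a - f b) (f a - f b) = g a b) ∧
      InGenPos d (Set.range f) ∧ Function.Injective f := by
  obtain ⟨w, hw⟩ := exists_seq_inner_momentCurve_sub_eq (fun n m => G.Adj (e n) (e m)) hdeg
    fun n m => g (e n) (e m) / 4
  set F : ℕ → Mink d := fun n => toMink (momentCurve d n) (w n)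
  have hF_edge (n m : ℕ) (hnm : G.Adj (e n) (e m)) :
      mform d (F n - F m) (F n - F m) = g (e n) (e m) := by
    rw [toMink_sub_toMink, mform_toMink_self]
    rcases lt_or_gt_of_ne fun h => G.ne_of_adj hnm (congrArg e h) with h | h
    · rw [← neg_sub (momentCurve d m), ← neg_sub (w m), inner_neg_neg, hw m n h hnm.symm, hsymm]
      ring
    · rw [hw n m h hnm]
      ring
  refine ⟨F ∘ e.symm, fun a b hab => ?_, ?_,
    (injective_toMink_momentCurve hd Nat.cast_injective w).comp e.symm.injective⟩
  · simpa using hF_edge (e.symm a) (e.symm b) (by simpa using hab)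
  · rw [e.symm.surjective.range_comp]
    exact inGenPos_range_toMink_momentCurve hd Nat.cast_injective w
end

section
/- Let d ≥ 1 and let Σ and Δ be two complementary isotropic d-dimensional linear subspaces of ℝ^d_d (so ℝ^d_d = Σ ⊕ Δ), and let P_Δ denote the projection onto Δ along Σ. Let v₀ ∈ Δ, let 1 ≤ k ≤ d, and let u₁, …, u_k ∈ ℝ^d_d be points such that the k+1 points v₀, P_Δ(u₁), …, P_Δ(u_k) are affinely independent. Then for any real numbers c₁, …, c_k there exists a point u₀ ∈ ℝ^d_d such that ⟨u₀ − uᵢ, u₀ − uᵢ⟩ = cᵢ for every 1 ≤ i ≤ k, and P_Δ(u₀) = v₀. -/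
/-!
Write `u₀ = s + v₀` with `s ∈ Σ`; then `P_Δ u₀ = v₀`, and since `Σ` is isotropic,
`⟨u₀ - uᵢ, u₀ - uᵢ⟩ = ⟨v₀ - uᵢ, v₀ - uᵢ⟩ - 2 ⟨s, P_Δ uᵢ - v₀⟩`. The vectors `P_Δ uᵢ - v₀ ∈ Δ` are
linearly independent, so it suffices to prescribe the values of the functional `⟨s, ·⟩` on them.
This is possible because `s ↦ ⟨s, ·⟩|_Δ` is an isomorphism `Σ ≃ Δ*`: it is injective since the
form is nondegenerate and `Σ` pairs trivially with itself, and `dim Σ = dim Δ`.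
-/

open Module

theorem AffineIndependent.linearIndependent_vsub_of_cons {k V P : Type*} [Ring k]
    [AddCommGroup V] [Module k V] [AddTorsor V P] {n : ℕ} {p₀ : P} {p : Fin n → P}
    (h : AffineIndependent k (Fin.cons p₀ p : Fin (n + 1) → P)) :
    LinearIndependent k fun i => p i -ᵥ p₀ :=
  ((affineIndependent_iff_linearIndependent_vsub k _ 0).1 h).comp
    (fun i => ⟨i.succ, i.succ_ne_zero⟩) fun _ _ hij =>
      Fin.succ_injective _ (Subtype.ext_iff.1 hij)

namespace LinearMap.BilinForm

variable {K V : Type*} [Field K] [AddCommGroup V] [Module K V] {B : LinearMap.BilinForm K V}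
  {S D : Submodule K V}

theorem IsSymm.apply_eq_zero_of_isotropic [NeZero (2 : K)] (hB : B.IsSymm)
    (hS : ∀ x ∈ S, B x x = 0) {x y : V} (hx : x ∈ S) (hy : y ∈ S) : B x y = 0 := by
  rw [hB.polarization, hS _ (add_mem hx hy), hS x hx, hS y hy]
  simp

section Complement

variable (hSD : IsCompl S D) (hS : ∀ x ∈ S, ∀ y ∈ S, B x y = 0)
include hSD hS

theorem apply_projection_eq_apply {s : V} (hs : s ∈ S) (x : V) :
    B s (D.projection S hSD.symm x) = B s x := by
  conv_rhs => rw [← Submodule.projection_add_projection_eq_self hSD x]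
  rw [map_add, hS s hs _ (Submodule.projection_apply_mem _ _), zero_add]

theorem injective_domRestrict₁₂_of_isCompl (hB : B.SeparatingLeft) :
    Function.Injective (B.domRestrict₁₂ S D) := by
  rw [injective_iff_map_eq_zero]
  intro s hs
  suffices ∀ y ∈ S ⊔ D, B s y = 0 by
    exact Subtype.ext (hB s fun y => this y (hSD.sup_eq_top ▸ Submodule.mem_top))
  intro y hy
  obtain ⟨a, ha, b, hb, rfl⟩ := Submodule.mem_sup.mp hy
  rw [map_add, hS s s.2 a ha, zero_add]
  exact congr($hs ⟨b, hb⟩)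

variable [FiniteDimensional K V]

theorem surjective_domRestrict₁₂_of_isCompl (hB : B.SeparatingLeft)
    (hdim : finrank K S = finrank K D) :
    Function.Surjective (B.domRestrict₁₂ S D) :=
  (LinearMap.injective_iff_surjective_of_finrank_eq_finrank
    (hdim.trans (Subspace.dual_finrank_eq).symm)).mp
    (injective_domRestrict₁₂_of_isCompl hSD hS hB)

theorem exists_mem_forall_apply_eq_of_linearIndependent (hB : B.SeparatingLeft)
    (hdim : finrank K S = finrank K D) {ι : Type*} {δ : ι → V}
    (hδD : ∀ i, δ i ∈ D) (hδ : LinearIndependent K δ) (t : ι → K) :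
    ∃ s ∈ S, ∀ i, B s (δ i) = t i := by
  obtain ⟨φ, hφ⟩ := dualMap_surjective_of_injective hδ (Finsupp.linearCombination K t)
  obtain ⟨s, hs⟩ := surjective_domRestrict₁₂_of_isCompl hSD hS hB hdim (φ.domRestrict D)
  refine ⟨s, s.2, fun i => ?_⟩
  have hφi := congr($hφ (Finsupp.single i 1))
  simp only [dualMap_apply, Finsupp.linearCombination_single, one_smul] at hφi
  rw [← hφi]
  exact congr($hs ⟨δ i, hδD i⟩)

end Complement

theorem IsSymm.exists_mem_forall_apply_add_sub_self_eq [FiniteDimensional K V] [NeZero (2 : K)]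
    (hB : B.IsSymm) (hBsep : B.SeparatingLeft) (hSD : IsCompl S D)
    (hS : ∀ x ∈ S, ∀ y ∈ S, B x y = 0) (hdim : finrank K S = finrank K D)
    {p₀ : V} (hp₀ : p₀ ∈ D) {ι : Type*} {u : ι → V}
    (hu : LinearIndependent K fun i => D.projection S hSD.symm (u i) - p₀) (c : ι → K) :
    ∃ s ∈ S, ∀ i, B (s + p₀ - u i) (s + p₀ - u i) = c i := by
  obtain ⟨s, hs, hsδ⟩ := exists_mem_forall_apply_eq_of_linearIndependent hSD hS hBsep hdim
    (fun i => sub_mem (Submodule.projection_apply_mem _ _) hp₀) hu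
    fun i => (B (p₀ - u i) (p₀ - u i) - c i) / 2
  refine ⟨s, hs, fun i => ?_⟩
  have hcross : B s (p₀ - u i) = -B s (D.projection S hSD.symm (u i) - p₀) := by
    rw [← apply_projection_eq_apply hSD hS hs, map_sub,
      Submodule.projection_apply_of_mem_left _ hp₀, ← map_neg, neg_sub]
  calc B (s + p₀ - u i) (s + p₀ - u i)
      = B s s + 2 * B s (p₀ - u i) + B (p₀ - u i) (p₀ - u i) := by
        simp only [add_sub_assoc, map_add, LinearMap.add_apply, hB.eq (p₀ - u i) s]; ring
    _ = c i := by
        rw [hS s hs s hs, hcross, hsδ]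
        field_simp
        ring

end LinearMap.BilinForm

noncomputable def mformBilin (d : ℕ) : LinearMap.BilinForm ℝ (Mink d) :=
  (innerₗ _).compl₁₂ (LinearMap.fst ℝ _ _) (LinearMap.fst ℝ _ _) -
    (innerₗ _).compl₁₂ (LinearMap.snd ℝ _ _) (LinearMap.snd ℝ _ _)

theorem mformBilin_apply (d : ℕ) (x y : Mink d) : mformBilin d x y = mform d x y := rfl

theorem isSymm_mformBilin (d : ℕ) : (mformBilin d).IsSymm :=
  ⟨fun x y => by simp only [mformBilin_apply, mform, real_inner_comm]⟩

theorem separatingLeft_mformBilin (d : ℕ) : (mformBilin d).SeparatingLeft := by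
  intro x hx
  have h := hx (x.1, -x.2)
  rw [mformBilin_apply, mform, inner_neg_right, sub_neg_eq_add, real_inner_self_eq_norm_sq,
    real_inner_self_eq_norm_sq, add_eq_zero_iff_of_nonneg (sq_nonneg _) (sq_nonneg _)] at h
  exact Prod.ext (norm_eq_zero.1 (pow_eq_zero_iff two_ne_zero |>.1 h.1))
    (norm_eq_zero.1 (pow_eq_zero_iff two_ne_zero |>.1 h.2))

theorem lemma_linear_general (d : ℕ)
    (Sg Dl : Submodule ℝ (Mink d)) (hcompl : IsCompl Sg Dl)
    (hSgiso : ∀ x ∈ Sg, mform d x x = 0)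
    (hSgdim : finrank ℝ Sg = d) (hDldim : finrank ℝ Dl = d)
    (PΔ : Mink d → Mink d)
    (hPΔ : ∀ x : Mink d, PΔ x = (Dl.linearProjOfIsCompl Sg hcompl.symm x : Mink d))
    (v₀ : Mink d) (hv₀ : v₀ ∈ Dl)
    (k : ℕ) (u : Fin k → Mink d)
    (hindep : AffineIndependent ℝ (Fin.cons v₀ (fun i => PΔ (u i)) : Fin (k + 1) → Mink d))
    (c : Fin k → ℝ) :
    ∃ u₀ : Mink d,
      (∀ i : Fin k, mform d (u₀ - u i) (u₀ - u i) = c i) ∧ PΔ u₀ = v₀ := by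
  have hP : PΔ = Dl.projection Sg hcompl.symm := funext hPΔ
  subst hP
  have hSg : ∀ x ∈ Sg, ∀ y ∈ Sg, mformBilin d x y = 0 := fun x hx y hy =>
    (isSymm_mformBilin d).apply_eq_zero_of_isotropic hSgiso hx hy
  obtain ⟨s, hs, hc⟩ := (isSymm_mformBilin d).exists_mem_forall_apply_add_sub_self_eq
    (separatingLeft_mformBilin d) hcompl hSg (hSgdim.trans hDldim.symm) hv₀
    hindep.linearIndependent_vsub_of_cons c
  refine ⟨s + v₀, hc, ?_⟩
  rw [map_add, Submodule.projection_apply_of_mem_right _ hs,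
    Submodule.projection_apply_of_mem_left _ hv₀, zero_add]

/-- Lemma 2.1 of the paper.  Let `Σ, Δ` be complementary isotropic
`d`-dimensional subspaces of `ℝ^d_d`, let `v₀ ∈ Δ` and let `u₁, …, u_k` (`1 ≤ k ≤ d`)
be points whose `Δ`-projections together with `v₀` are affinely independent.  Then for
any reals `c₁, …, c_k` there is `u₀` with `⟨u₀ - uᵢ, u₀ - uᵢ⟩ = cᵢ` for all `i` and
`P_Δ(u₀) = v₀`. -/
theorem lemma_linear (d : ℕ) (hd : 1 ≤ d)
    (Sg Dl : Submodule ℝ (Mink d)) (hcompl : IsCompl Sg Dl)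
    (hSgiso : ∀ x ∈ Sg, mform d x x = 0) (hDliso : ∀ x ∈ Dl, mform d x x = 0)
    (hSgdim : finrank ℝ Sg = d) (hDldim : finrank ℝ Dl = d)
    (PΔ : Mink d → Mink d)
    (hPΔ : ∀ x : Mink d, PΔ x = (Dl.linearProjOfIsCompl Sg hcompl.symm x : Mink d))
    (v₀ : Mink d) (hv₀ : v₀ ∈ Dl)
    (k : ℕ) (hk1 : 1 ≤ k) (hkd : k ≤ d) (u : Fin k → Mink d)
    (hindep : AffineIndependent ℝ (Fin.cons v₀ (fun i => PΔ (u i)) : Fin (k + 1) → Mink d))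
    (c : Fin k → ℝ) :
    ∃ u₀ : Mink d,
      (∀ i : Fin k, mform d (u₀ - u i) (u₀ - u i) = c i) ∧ PΔ u₀ = v₀ :=
  lemma_linear_general d Sg Dl hcompl hSgiso hSgdim hDldim PΔ hPΔ v₀ hv₀ k u hindep c
end
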